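/- Under the Slater condition, the Lagrange multiplier of the proximal-point subproblem is uniformly bounded: if x_*^{k+1} is a KKT point of min{F(x) + L_f‖x − x̄^k‖² : g(x) ≤ 0} with multiplier z_*^{k+1} ≥ 0, x_feas satisfies g_i(x_feas) < 0 for all i, dom(h) has diameter D_h, and x* minimizes the original problem, then ‖z_*^{k+1}‖ ≤ (F(x_feas) − F(x*) + L_f D_h²)/min_i(−g_i(x_feas)). -/

import Mathlib

/-- Convex subdifferential of a real-valued function, relative to a set `D`. -/
def subdiffOn {n : ℕ} (D : Set (EuclideanSpace ℝ (Fin n)))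
    (f : EuclideanSpace ℝ (Fin n) → ℝ) (x : EuclideanSpace ℝ (Fin n)) :
    Set (EuclideanSpace ℝ (Fin n)) :=
  {v | ∀ y ∈ D, f x + (inner ℝ v (y - x) : ℝ) ≤ f y}

/-! Test the KKT conditions against the Slater point `x_feas`. Convexity of the constraints and
complementary slackness give `F_k(x^{k+1}) ≤ F_k(x_feas) + ∑ zᵢ gᵢ(x_feas) ≤ F_k(x_feas) - c ∑ zᵢ`
with `c = minᵢ (-gᵢ(x_feas)) > 0`. Feasibility of `x^{k+1}` gives `F(x*) ≤ F_k(x^{k+1})`, the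
diameter bound gives `F_k(x_feas) ≤ F(x_feas) + L_f D_h²`, and `‖z‖₂ ≤ ∑ zᵢ` since `z ≥ 0`. -/

open Finset

theorem ConvexOn.add_fderiv_sub_le {E : Type*} [NormedAddCommGroup E] [NormedSpace ℝ E]
    {s : Set E} {f : E → ℝ} {f' : E →L[ℝ] ℝ} {x y : E} (hf : ConvexOn ℝ s f)
    (hx : x ∈ s) (hy : y ∈ s) (hd : HasFDerivAt f f' x) :
    f x + f' (y - x) ≤ f y := by
  have hline : ConvexOn ℝ (AffineMap.lineMap x y ⁻¹' s) (f ∘ AffineMap.lineMap x y) :=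
    hf.comp_affineMap _
  have hderiv : HasDerivAt (f ∘ AffineMap.lineMap x y) (f' (y - x)) (0 : ℝ) :=
    (by simpa using hd : HasFDerivAt f f' (AffineMap.lineMap x y (0 : ℝ))).comp_hasDerivAt _
      AffineMap.hasDerivAt_lineMap
  have hslope := hline.le_slope_of_hasDerivAt (by simpa using hx) (by simpa using hy) one_pos hderiv
  rw [slope_def_field] at hslope
  simp only [Function.comp_apply, AffineMap.lineMap_apply_zero, AffineMap.lineMap_apply_one,
    sub_zero, div_one] at hslope
  linarith

theorem ConvexOn.add_inner_sub_le_of_hasGradientAt {E : Type*} [NormedAddCommGroup E]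
    [InnerProductSpace ℝ E] [CompleteSpace E] {s : Set E} {f : E → ℝ} {v x y : E}
    (hf : ConvexOn ℝ s f) (hx : x ∈ s) (hy : y ∈ s) (hd : HasGradientAt f v x) :
    f x + inner ℝ v (y - x) ≤ f y := by
  simpa using hf.add_fderiv_sub_le hx hy hd.hasFDerivAt

/-- A KKT point minimizes the Lagrangian `φ + ∑ zᵢ gᵢ` over `D`; complementary slackness removes
the constraint terms at the point itself. -/
theorem le_add_sum_mul_of_kkt {n : ℕ} {ι : Type*} [Fintype ι]
    {D : Set (EuclideanSpace ℝ (Fin n))} {φ : EuclideanSpace ℝ (Fin n) → ℝ}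
    {g : ι → EuclideanSpace ℝ (Fin n) → ℝ} {v : ι → EuclideanSpace ℝ (Fin n)}
    {x y : EuclideanSpace ℝ (Fin n)} {z : ι → ℝ}
    (hgc : ∀ i, ConvexOn ℝ Set.univ (g i)) (hgd : ∀ i, HasGradientAt (g i) (v i) x)
    (hz : ∀ i, 0 ≤ z i) (hcomp : ∀ i, z i * g i x = 0)
    (hstat : ∃ u ∈ subdiffOn D φ x, u + ∑ i, z i • v i = 0) (hy : y ∈ D) :
    φ x ≤ φ y + ∑ i, z i * g i y := by
  obtain ⟨u, hu, hsum⟩ := hstat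
  have hinner : inner ℝ u (y - x) = -∑ i, z i * inner ℝ (v i) (y - x) := by
    simp [eq_neg_of_add_eq_zero_left hsum, inner_neg_left, sum_inner, real_inner_smul_left]
  have hterm : ∀ i, z i * inner ℝ (v i) (y - x) ≤ z i * g i y := fun i => by
    have hgrad := (hgc i).add_inner_sub_le_of_hasGradientAt trivial trivial (hgd i) (y := y)
    calc z i * inner ℝ (v i) (y - x) ≤ z i * (g i y - g i x) :=
          mul_le_mul_of_nonneg_left (by linarith) (hz i)
      _ = z i * g i y := by rw [mul_sub, hcomp i, sub_zero]
  linarith [hu y hy, sum_le_sum fun i (_ : i ∈ univ) => hterm i]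

theorem EuclideanSpace.norm_le_sum_norm {ι : Type*} [Fintype ι] (x : EuclideanSpace ℝ ι) :
    ‖x‖ ≤ ∑ i, ‖x i‖ := by
  rw [EuclideanSpace.norm_eq]
  exact Real.sqrt_le_iff.mpr ⟨sum_nonneg fun i _ => norm_nonneg _,
    sum_sq_le_sq_sum_of_nonneg fun i _ => norm_nonneg _⟩

theorem EuclideanSpace.norm_le_div_inf'_of_sum_mul_le {ι : Type*} [Fintype ι]
    {z : EuclideanSpace ℝ ι} {s : ι → ℝ} {B : ℝ} (hne : (univ : Finset ι).Nonempty)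
    (hz : ∀ i, 0 ≤ z i) (hs : 0 < univ.inf' hne s) (hB : ∑ i, z i * s i ≤ B) :
    ‖z‖ ≤ B / univ.inf' hne s := by
  rw [le_div_iff₀ hs]
  calc ‖z‖ * univ.inf' hne s ≤ (∑ i, z i) * univ.inf' hne s := by
        gcongr
        simpa [Real.norm_of_nonneg (hz _)] using z.norm_le_sum_norm
    _ = ∑ i, z i * univ.inf' hne s := sum_mul _ _ _
    _ ≤ ∑ i, z i * s i :=
        sum_le_sum fun i _ => mul_le_mul_of_nonneg_left (inf'_le _ (mem_univ i)) (hz i)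
    _ ≤ B := hB

theorem stmt_17_general {n m : ℕ} (hm : 0 < m)
    (g : Fin m → EuclideanSpace ℝ (Fin n) → ℝ)
    (gradg : Fin m → EuclideanSpace ℝ (Fin n) → EuclideanSpace ℝ (Fin n))
    (hgc : ∀ i, ConvexOn ℝ Set.univ (g i))
    (hgd : ∀ i x, HasGradientAt (g i) (gradg i x) x)
    (D : Set (EuclideanSpace ℝ (Fin n)))
    (Dh : ℝ) (hdiam : ∀ x ∈ D, ∀ y ∈ D, dist x y ≤ Dh)
    (F : EuclideanSpace ℝ (Fin n) → ℝ)
    (Lf : ℝ) (hLf : 0 < Lf)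
    (xbark : EuclideanSpace ℝ (Fin n)) (hxbark : xbark ∈ D)
    (Fk : EuclideanSpace ℝ (Fin n) → ℝ)
    (hFk : ∀ x, Fk x = F x + Lf * ‖x - xbark‖ ^ 2)
    -- Slater point
    (xfeas : EuclideanSpace ℝ (Fin n)) (hxfeas : xfeas ∈ D)
    (hslater : ∀ i, g i xfeas < 0)
    -- global minimizer of the original problem
    (xstar : EuclideanSpace ℝ (Fin n))
    (hxstarmin : ∀ x ∈ D, (∀ i, g i x ≤ 0) → F xstar ≤ F x)
    -- KKT point of the proximal-point subproblem
    (xk1 : EuclideanSpace ℝ (Fin n)) (hxk1 : xk1 ∈ D)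
    (zk1 : EuclideanSpace ℝ (Fin m)) (hzpos : ∀ i, 0 ≤ zk1 i)
    (hfeask : ∀ i, g i xk1 ≤ 0)
    (hstat : ∃ u ∈ subdiffOn D Fk xk1, u + ∑ i, zk1 i • gradg i xk1 = 0)
    (hcomp : ∀ i, zk1 i * g i xk1 = 0) :
    ‖zk1‖ ≤ (F xfeas - F xstar + Lf * Dh ^ 2) /
      (Finset.univ.inf' (Finset.univ_nonempty_iff.mpr ⟨⟨0, hm⟩⟩)
        (fun i => -g i xfeas)) := by
  have hlag : Fk xk1 ≤ Fk xfeas + ∑ i, zk1 i * g i xfeas :=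
    le_add_sum_mul_of_kkt hgc (fun i => hgd i xk1) hzpos hcomp hstat hxfeas
  have hlower : F xstar ≤ Fk xk1 := by
    rw [hFk]
    linarith [hxstarmin xk1 hxk1 hfeask, mul_nonneg hLf.le (sq_nonneg ‖xk1 - xbark‖)]
  have hupper : Fk xfeas ≤ F xfeas + Lf * Dh ^ 2 := by
    have hdist : ‖xfeas - xbark‖ ≤ Dh := by
      simpa [dist_eq_norm] using hdiam _ hxfeas _ hxbark
    rw [hFk]
    gcongr
  refine EuclideanSpace.norm_le_div_inf'_of_sum_mul_le _ hzpos ?_ ?_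
  · exact (lt_inf'_iff _).mpr fun i _ => neg_pos.mpr (hslater i)
  · simp only [mul_neg, sum_neg_distrib]
    linarith

/-- uniform bound on the multipliers of the proximal-point
subproblems under the Slater condition. -/
theorem stmt_17 {n m : ℕ} (hm : 0 < m)
    (f h : EuclideanSpace ℝ (Fin n) → ℝ)
    (g : Fin m → EuclideanSpace ℝ (Fin n) → ℝ)
    (gradg : Fin m → EuclideanSpace ℝ (Fin n) → EuclideanSpace ℝ (Fin n))
    (hf : ConvexOn ℝ Set.univ f) (hgc : ∀ i, ConvexOn ℝ Set.univ (g i))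
    (hgd : ∀ i x, HasGradientAt (g i) (gradg i x) x)
    (D : Set (EuclideanSpace ℝ (Fin n))) (hDconv : Convex ℝ D)
    (Dh : ℝ) (hdiam : ∀ x ∈ D, ∀ y ∈ D, dist x y ≤ Dh)
    (hh : ConvexOn ℝ D h)
    (F : EuclideanSpace ℝ (Fin n) → ℝ) (hF : ∀ x, F x = f x + h x)
    (Lf : ℝ) (hLf : 0 < Lf)
    (xbark : EuclideanSpace ℝ (Fin n)) (hxbark : xbark ∈ D)
    (Fk : EuclideanSpace ℝ (Fin n) → ℝ)
    (hFk : ∀ x, Fk x = F x + Lf * ‖x - xbark‖ ^ 2)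
    -- Slater point
    (xfeas : EuclideanSpace ℝ (Fin n)) (hxfeas : xfeas ∈ D)
    (hslater : ∀ i, g i xfeas < 0)
    -- global minimizer of the original problem
    (xstar : EuclideanSpace ℝ (Fin n)) (hxstarD : xstar ∈ D)
    (hxstarfeas : ∀ i, g i xstar ≤ 0)
    (hxstarmin : ∀ x ∈ D, (∀ i, g i x ≤ 0) → F xstar ≤ F x)
    -- KKT point of the proximal-point subproblem
    (xk1 : EuclideanSpace ℝ (Fin n)) (hxk1 : xk1 ∈ D)
    (zk1 : EuclideanSpace ℝ (Fin m)) (hzpos : ∀ i, 0 ≤ zk1 i)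
    (hfeask : ∀ i, g i xk1 ≤ 0)
    (hstat : ∃ u ∈ subdiffOn D Fk xk1, u + ∑ i, zk1 i • gradg i xk1 = 0)
    (hcomp : ∀ i, zk1 i * g i xk1 = 0) :
    ‖zk1‖ ≤ (F xfeas - F xstar + Lf * Dh ^ 2) /
      (Finset.univ.inf' (Finset.univ_nonempty_iff.mpr ⟨⟨0, hm⟩⟩)
        (fun i => -g i xfeas)) :=
  stmt_17_general hm g gradg hgc hgd D Dh hdiam F Lf hLf xbark hxbark Fk hFk xfeas hxfeas hslater
    xstar hxstarmin xk1 hxk1 zk1 hzpos hfeask hstat hcomp
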